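/- arXiv:1402.0897 — 8 statements merged into one kernel-verified Lean document; each statement's English description precedes it below -/
import Mathlib

section
/- (Myhill–Nerode theorem for G-sets.) Let (D, G) be a data symmetry, A an orbit-finite G-set, and L ⊆ A* an equivariant language. The following are equivalent: (1) the quotient G-set A*/≡_L (with action [w]·π = [w·π]) is orbit finite; (2) L is recognized by a deterministic G-automaton whose set of states is orbit finite. -/
universe u

/-- The Myhill–Nerode equivalence of a language `L`, as a setoid on words. -/
def mnSetoid {A : Type*} (L : Set (List A)) : Setoid (List A) where
  r w w' := ∀ v : List A, w ++ v ∈ L ↔ w' ++ v ∈ L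
  iseqv := ⟨fun _ _ => Iff.rfl, fun h v => (h v).symm, fun h1 h2 v => (h1 v).trans (h2 v)⟩

/-- Myhill–Nerode theorem for G-sets: for an orbit-finite G-set A and an
equivariant language L ⊆ A*, the quotient A*/≡_L (with action [w]·π = [w·π]) is orbit
finite iff L is recognized by a deterministic G-automaton with orbit-finite state set. -/
theorem myhill_nerode_theorem {D : Type*} {A : Type u}
    (G : Subgroup (Equiv.Perm D))
    (actA : A → ↥G → A)
    (actA_one : ∀ a : A, actA a 1 = a)
    (actA_mul : ∀ (a : A) (π σ : ↥G), actA a (π * σ) = actA (actA a π) σ)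
    (hA_orbitFinite : ∃ S : Set A, S.Finite ∧ ∀ a : A, ∃ b ∈ S, ∃ π : ↥G, a = actA b π)
    (L : Set (List A))
    (hL : ∀ (w : List A) (π : ↥G), w ∈ L ↔ w.map (fun a => actA a π) ∈ L) :
    -- (1) the quotient A*/≡_L is orbit finite (finitely many orbits, i.e., a finite
    -- set of representatives meeting every orbit of the action [w]·π = [w·π])
    (∃ S : Set (List A), S.Finite ∧
      ∀ w : List A, ∃ w' ∈ S, ∃ π : ↥G,
        Quotient.mk (mnSetoid L) w = Quotient.mk (mnSetoid L) (w'.map (fun a => actA a π)))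
    ↔
    -- (2) L is recognized by a deterministic G-automaton with orbit-finite states
    (∃ (Q : Type u) (actQ : Q → ↥G → Q),
      (∀ q : Q, actQ q 1 = q) ∧
      (∀ (q : Q) (π σ : ↥G), actQ q (π * σ) = actQ (actQ q π) σ) ∧
      (∃ S : Set Q, S.Finite ∧ ∀ q : Q, ∃ p ∈ S, ∃ π : ↥G, q = actQ p π) ∧
      ∃ (δ : Q → A → Q) (qI : Q) (F : Set Q),
        (∀ (q : Q) (a : A) (π : ↥G), δ (actQ q π) (actA a π) = actQ (δ q a) π) ∧
        (∀ π : ↥G, actQ qI π = qI) ∧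
        (∀ (q : Q) (π : ↥G), q ∈ F → actQ q π ∈ F) ∧
        (∀ w : List A, List.foldl δ qI w ∈ F ↔ w ∈ L)) := by
  classical
  -- basic facts about the letterwise action on words
  have hmapmul : ∀ (w : List A) (π σ : ↥G),
      (w.map (fun a => actA a π)).map (fun a => actA a σ)
        = w.map (fun a => actA a (π * σ)) := by
    intro w π σ
    rw [List.map_map]
    refine List.map_congr_left fun a _ => ?_
    simp [Function.comp, actA_mul]
  have hmapone : ∀ (w : List A), w.map (fun a => actA a (1 : ↥G)) = w := by
    intro w; simp [actA_one]
  have hmapinv : ∀ (w : List A) (π : ↥G),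
      (w.map (fun a => actA a π)).map (fun a => actA a π⁻¹) = w := by
    intro w π; rw [hmapmul, mul_inv_cancel, hmapone]
  constructor
  · -- (1) → (2): take the quotient as the state set
    rintro ⟨S, hSfin, hS⟩
    have hresp : ∀ (π : ↥G) (w w' : List A), (mnSetoid L).r w w' →
        (mnSetoid L).r (w.map (fun a => actA a π)) (w'.map (fun a => actA a π)) := by
      intro π w w' h v
      have e1 : (w.map (fun a => actA a π) ++ v).map (fun a => actA a π⁻¹)
          = w ++ v.map (fun a => actA a π⁻¹) := by
        rw [List.map_append, hmapinv]
      have e2 : (w'.map (fun a => actA a π) ++ v).map (fun a => actA a π⁻¹)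
          = w' ++ v.map (fun a => actA a π⁻¹) := by
        rw [List.map_append, hmapinv]
      rw [hL (w.map (fun a => actA a π) ++ v) π⁻¹, e1,
          hL (w'.map (fun a => actA a π) ++ v) π⁻¹, e2]
      exact h _
    refine ⟨Quotient (mnSetoid L),
      fun q π => Quotient.lift
        (fun w => Quotient.mk (mnSetoid L) (w.map (fun a => actA a π)))
        (fun w w' h => Quotient.sound (hresp π w w' h)) q, ?_, ?_, ?_, ?_⟩
    · intro q
      induction q using Quotient.inductionOn with
      | h w => exact congrArg _ (hmapone w)
    · intro q π σ
      induction q using Quotient.inductionOn with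
      | h w => exact congrArg _ ((hmapmul w π σ).symm)
    · refine ⟨(Quotient.mk (mnSetoid L)) '' S, hSfin.image _, ?_⟩
      intro q
      induction q using Quotient.inductionOn with
      | h w =>
        obtain ⟨w', hw', π, hπ⟩ := hS w
        exact ⟨Quotient.mk (mnSetoid L) w', ⟨w', hw', rfl⟩, π, hπ⟩
    · refine ⟨fun q a => Quotient.lift
        (fun w => Quotient.mk (mnSetoid L) (w ++ [a]))
        (fun w w' h => Quotient.sound (fun v => by
          rw [List.append_assoc, List.append_assoc]; exact h _)) q,
        Quotient.mk (mnSetoid L) [],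
        {q | Quotient.lift (fun w => w ∈ L)
          (fun w w' h => propext (by simpa using h [])) q}, ?_, ?_, ?_, ?_⟩
      · intro q a π
        induction q using Quotient.inductionOn with
        | h w =>
          show Quotient.mk (mnSetoid L) (w.map (fun a => actA a π) ++ [actA a π])
            = Quotient.mk (mnSetoid L) ((w ++ [a]).map (fun a => actA a π))
          simp
      · intro π; rfl
      · intro q π hq
        induction q using Quotient.inductionOn with
        | h w => exact (hL w π).mp hq
      · intro w
        have key : ∀ (w : List A) (u : List A),
            List.foldl (fun q a => Quotient.lift
              (fun w => Quotient.mk (mnSetoid L) (w ++ [a]))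
              (fun w w' h => Quotient.sound (fun v => by
                rw [List.append_assoc, List.append_assoc]; exact h _)) q) 
              (Quotient.mk (mnSetoid L) u) w
              = Quotient.mk (mnSetoid L) (u ++ w) := by
          intro w
          induction w with
          | nil => intro u; simp
          | cons a w ih =>
            intro u
            simp only [List.foldl_cons]
            exact (ih (u ++ [a])).trans (congrArg _ (List.append_assoc u [a] w))
        have := key w []
        simp only [List.nil_append] at this
        rw [this]
        rfl
  · -- (2) → (1)
    rintro ⟨Q, actQ, hQone, hQmul, ⟨S, hSfin, hS⟩, δ, qI, F, hδ, hqI, hF, hacc⟩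
    set φ : List A → Q := fun w => List.foldl δ qI w with hφ
    have hφeq : ∀ w w' : List A, φ w = φ w' →
        Quotient.mk (mnSetoid L) w = Quotient.mk (mnSetoid L) w' := by
      intro w w' h
      refine Quotient.sound fun v => ?_
      rw [← hacc, ← hacc]
      show List.foldl δ qI (w ++ v) ∈ F ↔ List.foldl δ qI (w' ++ v) ∈ F
      simp only [List.foldl_append]
      rw [show List.foldl δ qI w = List.foldl δ qI w' from h]
    have hfoldmap : ∀ (w : List A) (π : ↥G) (q : Q),
        List.foldl δ (actQ q π) (w.map (fun a => actA a π)) = actQ (List.foldl δ q w) π := by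
      intro w
      induction w with
      | nil => intro π q; rfl
      | cons a w ih =>
        intro π q
        simp only [List.map_cons, List.foldl_cons, hδ]
        exact ih π (δ q a)
    have hφmap : ∀ (w : List A) (π : ↥G),
        φ (w.map (fun a => actA a π)) = actQ (φ w) π := by
      intro w π
      have := hfoldmap w π qI
      rwa [hqI] at this
    -- choose a reachable representative word for each state orbit when possible
    set f : Q → List A := fun p =>
      if h : ∃ u : List A, ∃ σ : ↥G, φ u = actQ p σ then h.choose else [] with hf
    refine ⟨f '' S, hSfin.image f, ?_⟩
    intro w
    obtain ⟨p, hpS, π, hp⟩ := hS (φ w)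
    have hex : ∃ u : List A, ∃ σ : ↥G, φ u = actQ p σ := ⟨w, π, hp⟩
    obtain ⟨σ, hσ⟩ := hex.choose_spec
    refine ⟨f p, ⟨p, hpS, rfl⟩, σ⁻¹ * π, ?_⟩
    have hfp : f p = hex.choose := dif_pos hex
    apply hφeq
    rw [hφmap, hfp, hσ, ← hQmul, ← mul_assoc, mul_inv_cancel, one_mul, ← hp]
end

section
/- Let (D, G) be any data symmetry and let A be an orbit-finite G-set that is nominal. Then in every reachable deterministic G-automaton over the alphabet A, the G-set Q of states is nominal: every state has a finite support. -/
/-- For any data symmetry (D, G) and any orbit-finite nominal alphabet A,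
in every reachable deterministic G-automaton over A the G-set of states is nominal:
every state has a finite support. -/
theorem reachable_automaton_states_nominal {D A Q : Type*}
    (G : Subgroup (Equiv.Perm D))
    (actA : A → ↥G → A)
    (actA_one : ∀ a : A, actA a 1 = a)
    (actA_mul : ∀ (a : A) (π σ : ↥G), actA a (π * σ) = actA (actA a π) σ)
    (hA_orbitFinite : ∃ S : Set A, S.Finite ∧ ∀ a : A, ∃ b ∈ S, ∃ π : ↥G, a = actA b π)
    (hA_nominal : ∀ a : A, ∃ C : Finset D,
      ∀ π : ↥G, (∀ c ∈ C, (π : Equiv.Perm D) c = c) → actA a π = a)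
    -- a deterministic G-automaton (Q, δ, q_I, F) over A
    (actQ : Q → ↥G → Q)
    (actQ_one : ∀ q : Q, actQ q 1 = q)
    (actQ_mul : ∀ (q : Q) (π σ : ↥G), actQ q (π * σ) = actQ (actQ q π) σ)
    (δ : Q → A → Q) (qI : Q) (F : Set Q)
    (hδ_equivariant : ∀ (q : Q) (a : A) (π : ↥G), δ (actQ q π) (actA a π) = actQ (δ q a) π)
    (hqI : ∀ π : ↥G, actQ qI π = qI)
    (hF_equivariant : ∀ (q : Q) (π : ↥G), q ∈ F → actQ q π ∈ F)
    -- which is reachable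
    (hreach : ∀ q : Q, ∃ w : List A, List.foldl δ qI w = q) :
    ∀ q : Q, ∃ C : Finset D,
      ∀ π : ↥G, (∀ c ∈ C, (π : Equiv.Perm D) c = c) → actQ q π = q := by
  -- equivariance of foldl
  have hfold : ∀ (w : List A) (q : Q) (π : ↥G),
      actQ (List.foldl δ q w) π = List.foldl δ (actQ q π) (w.map (fun a => actA a π)) := by
    intro w
    induction w with
    | nil => intro q π; simp
    | cons a w ih =>
      intro q π
      simp only [List.foldl_cons, List.map_cons]
      rw [ih, hδ_equivariant]
  haveI := Classical.decEq D
  intro q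
  obtain ⟨w, hw⟩ := hreach q
  -- support of a word
  have hword : ∀ w : List A, ∃ C : Finset D,
      ∀ π : ↥G, (∀ c ∈ C, (π : Equiv.Perm D) c = c) →
        w.map (fun a => actA a π) = w := by
    intro w
    induction w with
    | nil => exact ⟨∅, fun _ _ => rfl⟩
    | cons a w ih =>
      obtain ⟨Ca, hCa⟩ := hA_nominal a
      obtain ⟨Cw, hCw⟩ := ih
      refine ⟨Ca ∪ Cw, fun π hπ => ?_⟩
      simp only [List.map_cons]
      rw [hCa π (fun c hc => hπ c (Finset.mem_union_left _ hc)),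
        hCw π (fun c hc => hπ c (Finset.mem_union_right _ hc))]
  obtain ⟨C, hC⟩ := hword w
  refine ⟨C, fun π hπ => ?_⟩
  rw [← hw, hfold, hqI, hC π hπ]
end

section
/- Let D be a countably infinite set. There exist uncountably many pairwise non-conjugate subgroups of the symmetric group Sym(D). More precisely, there is a family of subgroups H_I ≤ Sym(D), indexed by the subsets I of the set of prime numbers, such that for I ≠ I' the subgroups H_I and H_{I'} are not conjugate in Sym(D). -/
namespace UncountNonConj

abbrev PP := {p : ℕ // p.Prime}

instance (q : PP) : NeZero q.1 := ⟨q.2.pos.ne'⟩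

abbrev Sig := Σ q : PP, ZMod q.1 × ℕ

lemma conj_pow' {G : Type*} [Group G] (π g : G) (n : ℕ) :
    (π * g * π⁻¹) ^ n = π * g ^ n * π⁻¹ := by
  induction n with
  | zero => simp
  | succ n ih => rw [pow_succ, pow_succ, ih]; group

/-- Shift each sector `q` by `a q`. -/
def shift (a : ∀ q : PP, ZMod q.1) : Equiv.Perm Sig :=
  Equiv.sigmaCongrRight fun q => Equiv.prodCongr (Equiv.addLeft (a q)) (Equiv.refl ℕ)

@[simp] lemma shift_apply (a : ∀ q : PP, ZMod q.1) (q : PP) (x : ZMod q.1) (n : ℕ) :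
    shift a ⟨q, (x, n)⟩ = ⟨q, (a q + x, n)⟩ := rfl

lemma shift_add (a b : ∀ q : PP, ZMod q.1) : shift (a + b) = shift a * shift b := by
  apply Equiv.ext
  rintro ⟨q, x, n⟩
  simp [Equiv.Perm.mul_apply, add_assoc]

variable {D : Type*}

/-- The group homomorphism from the full product group into `Perm D`. -/
def Phi (e : D ≃ Sig) : Multiplicative (∀ q : PP, ZMod q.1) →* Equiv.Perm D where
  toFun a := Equiv.permCongr e.symm (shift (Multiplicative.toAdd a))
  map_one' := by
    ext d
    simp [shift]
  map_mul' a b := by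
    ext d
    simp only [Equiv.permCongr_apply, Equiv.symm_symm, Equiv.apply_symm_apply,
      Equiv.Perm.mul_apply, toAdd_mul]
    rw [shift_add, Equiv.Perm.mul_apply]
  
lemma Phi_apply (e : D ≃ Sig) (a) (d : D) :
    Phi e a d = e.symm (shift (Multiplicative.toAdd a) (e d)) := by
  simp [Phi, Equiv.permCongr_apply]

lemma Phi_eq_one_iff (e : D ≃ Sig) (a) : Phi e a = 1 ↔ a = 1 := by
  constructor
  · intro h
    have ha : Multiplicative.toAdd a = 0 := by
      funext q
      have h1 := Equiv.ext_iff.mp h (e.symm ⟨q, (0, 0)⟩)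
      rw [Phi_apply] at h1
      simp only [Equiv.apply_symm_apply, shift_apply, add_zero, Equiv.Perm.one_apply] at h1
      have h2 := e.symm.injective h1
      simpa using h2
    have : Multiplicative.toAdd a = Multiplicative.toAdd 1 := by simpa using ha
    exact Multiplicative.toAdd.injective this
  · rintro rfl; exact map_one _

/-- The subgroup of the product supported on `I`. -/
def S (I : Set PP) : Subgroup (Multiplicative (∀ q : PP, ZMod q.1)) where
  carrier := {a | ∀ q, Multiplicative.toAdd a q ≠ 0 → q ∈ I}
  one_mem' := by intro q h; simp at h
  mul_mem' := by
    intro a b ha hb q h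
    by_cases h1 : Multiplicative.toAdd a q = 0
    · refine hb q ?_
      intro h2
      apply h
      simp [h1, h2]
    · exact ha q h1
  inv_mem' := by
    intro a ha q h
    refine ha q ?_
    simpa using h

/-- The family of subgroups of `Perm D`. -/
def HH (e : D ≃ Sig) (I : Set PP) : Subgroup (Equiv.Perm D) := (S I).map (Phi e)

/-- delta element of order q. -/
def delta (q : PP) : Multiplicative (∀ r : PP, ZMod r.1) :=
  Multiplicative.ofAdd (Pi.single q (1 : ZMod q.1))

lemma exists_order (e : D ≃ Sig) {I : Set PP} {q : PP} (hq : q ∈ I) :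
    ∃ g ∈ HH e I, g ≠ 1 ∧ g ^ q.1 = 1 := by
  haveI : Fact q.1.Prime := ⟨q.2⟩
  refine ⟨Phi e (delta q), ⟨delta q, ?_, rfl⟩, ?_, ?_⟩
  · intro r hr
    by_cases h : r = q
    · exact h ▸ hq
    · exact absurd (by simp [delta, Pi.single_eq_of_ne h]) hr
  · rw [Ne, Phi_eq_one_iff]
    intro h
    have h2 : Multiplicative.toAdd (delta q) q = 0 := by rw [h]; simp
    rw [delta, toAdd_ofAdd, Pi.single_eq_same] at h2
    exact one_ne_zero h2
  · rw [← map_pow, Phi_eq_one_iff]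
    apply Multiplicative.toAdd.injective
    rw [toAdd_pow, toAdd_one]
    funext r
    simp only [Pi.smul_apply, Pi.zero_apply, delta, toAdd_ofAdd]
    by_cases h : r = q
    · subst h
      simp [nsmul_eq_mul, ZMod.natCast_self]
    · simp [Pi.single_eq_of_ne h]

lemma mem_order (e : D ≃ Sig) {I : Set PP} {q : PP} {g : Equiv.Perm D}
    (hg : g ∈ HH e I) (hne : g ≠ 1) (hpow : g ^ q.1 = 1) : q ∈ I := by
  obtain ⟨a, ha, rfl⟩ := hg
  rw [← map_pow, Phi_eq_one_iff] at hpow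
  have hane : a ≠ 1 := fun h => hne (h ▸ map_one _)
  have : ∃ r, Multiplicative.toAdd a r ≠ 0 := by
    by_contra h
    push_neg at h
    apply hane
    apply Multiplicative.toAdd.injective
    funext r
    simpa using h r
  obtain ⟨r, hr⟩ := this
  haveI : Fact r.1.Prime := ⟨r.2⟩
  have hmem : r ∈ I := ha r hr
  have hq0 : q.1 • Multiplicative.toAdd a r = 0 := by
    have := congrArg Multiplicative.toAdd hpow
    rw [toAdd_pow] at this
    have := congrFun this r
    simpa using this
  rw [nsmul_eq_mul, mul_eq_zero] at hq0
  rcases hq0 with h | h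
  · have : r.1 ∣ q.1 := (ZMod.natCast_eq_zero_iff _ _).mp h
    have : r.1 = q.1 := ((Nat.prime_dvd_prime_iff_eq r.2 q.2).mp this)
    have : r = q := Subtype.ext this
    exact this ▸ hmem
  · exact absurd h hr

end UncountNonConj

/-- For a countably infinite set D, there are uncountably many pairwise
non-conjugate subgroups of Sym(D): there is a family of subgroups of Sym(D) indexed by
the subsets of the set of prime numbers, whose distinct members are never conjugate. -/
theorem uncountably_many_nonconjugate_subgroups {D : Type*} [Countable D] [Infinite D] :
    ∃ H : Set {p : ℕ // p.Prime} → Subgroup (Equiv.Perm D),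
      ∀ I I' : Set {p : ℕ // p.Prime}, I ≠ I' →
        ¬ ∃ π : Equiv.Perm D, ∀ g : Equiv.Perm D, g ∈ H I' ↔ π⁻¹ * g * π ∈ H I := by
  classical
  haveI : Infinite UncountNonConj.Sig :=
    Infinite.of_injective (fun n : ℕ => ⟨⟨2, Nat.prime_two⟩, (0, n)⟩)
      (fun m n h => by simpa using h)
  obtain ⟨d1⟩ : Nonempty (Denumerable D) := nonempty_denumerable_iff.mpr ⟨‹_›, ‹_›⟩
  obtain ⟨d2⟩ : Nonempty (Denumerable UncountNonConj.Sig) :=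
    nonempty_denumerable_iff.mpr ⟨inferInstance, inferInstance⟩
  let e : D ≃ UncountNonConj.Sig := (@Denumerable.eqv D d1).trans (@Denumerable.eqv _ d2).symm
  refine ⟨UncountNonConj.HH e, ?_⟩
  intro I I' hne ⟨π, hπ⟩
  have key : ∀ q : {p : ℕ // p.Prime}, q ∈ I ↔ q ∈ I' := by
    intro q
    constructor
    · intro hq
      obtain ⟨g, hg, hg1, hgq⟩ := UncountNonConj.exists_order e hq
      have : π * g * π⁻¹ ∈ UncountNonConj.HH e I' := by
        rw [hπ]
        simpa [mul_assoc] using hg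
      refine UncountNonConj.mem_order e this ?_ ?_
      · intro h
        apply hg1
        have := congrArg (fun x => π⁻¹ * x * π) h
        simpa [mul_assoc] using this
      · rw [UncountNonConj.conj_pow', hgq]
        group
    · intro hq
      obtain ⟨g, hg, hg1, hgq⟩ := UncountNonConj.exists_order e hq
      have : π⁻¹ * g * π ∈ UncountNonConj.HH e I := (hπ g).mp hg
      refine UncountNonConj.mem_order e this ?_ ?_
      · intro h
        apply hg1
        have := congrArg (fun x => π * x * π⁻¹) h
        simpa [mul_assoc] using this
      · have h3 : (π⁻¹ * g * π) ^ q.1 = π⁻¹ * g ^ q.1 * π := by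
          simpa [inv_inv] using UncountNonConj.conj_pow' π⁻¹ g q.1
        rw [h3, hgq]
        group
  exact hne (Set.ext key)
end

section
/- Let (D, G) be a data symmetry and H ≤ G a subgroup. The G-set G/H^r of right cosets of H is nominal with respect to (D, G) if and only if H is open, i.e., if and only if there exists a finite set C ⊆ D with G_C ≤ H. -/
/-- The equivalence relation on a group `G` whose classes are the right cosets
`Hπ` of a subgroup `H`: `x ~ y` iff `x * y⁻¹ ∈ H` (so that `⟦x⟧` stands for `Hx`). -/
def rightCosetSetoid {G : Type*} [Group G] (H : Subgroup G) : Setoid G where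
  r x y := x * y⁻¹ ∈ H
  iseqv := by
    refine ⟨fun x => by simpa using H.one_mem, fun {x y} h => ?_, fun {x y z} h1 h2 => ?_⟩
    · simpa [mul_inv_rev] using H.inv_mem h
    · simpa [mul_assoc] using H.mul_mem h1 h2

theorem rightCosetSetoid_mk_mul_eq_iff {G : Type*} [Group G] (H : Subgroup G) (π σ : G) :
    Quotient.mk (rightCosetSetoid H) (π * σ) = Quotient.mk (rightCosetSetoid H) π ↔
      π * σ * π⁻¹ ∈ H :=
  Quotient.eq

theorem Equiv.Perm.mul_mul_inv_apply_eq_self_iff {D : Type*} (π σ : Equiv.Perm D) (c : D) :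
    (π * σ * π⁻¹) c = c ↔ σ (π⁻¹ c) = π⁻¹ c := by
  rw [Equiv.Perm.mul_apply, Equiv.Perm.mul_apply, ← Equiv.Perm.eq_inv_iff_eq]

/-- For a data symmetry (D, G) and a subgroup H ≤ G, the G-set G/H^r of
right cosets (with action (Hπ)·σ = H(πσ)) is nominal iff H is open, i.e., iff G_C ≤ H
for some finite C ⊆ D. -/
theorem coset_space_nominal_iff_open {D : Type*} (G : Subgroup (Equiv.Perm D))
    (H : Subgroup ↥G) :
    -- every right coset Hπ has a finite support
    (∀ π : ↥G, ∃ C : Finset D,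
      ∀ σ : ↥G, (∀ c ∈ C, (σ : Equiv.Perm D) c = c) →
        Quotient.mk (rightCosetSetoid H) (π * σ) = Quotient.mk (rightCosetSetoid H) π)
    ↔
    -- H is open: some pointwise stabilizer G_C is contained in H
    (∃ C : Finset D, ∀ σ : ↥G, (∀ c ∈ C, (σ : Equiv.Perm D) c = c) → σ ∈ H) := by
  classical
  constructor
  · intro nominal
    obtain ⟨C, hC⟩ := nominal 1
    refine ⟨C, fun σ hσ => ?_⟩
    simpa using (rightCosetSetoid_mk_mul_eq_iff H 1 σ).1 (hC σ hσ)
  · rintro ⟨C, hC⟩ π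
    -- `G_{π⁻¹C} = π⁻¹ G_C π ≤ π⁻¹ H π`
    refine ⟨C.image ⇑((π : Equiv.Perm D)⁻¹), fun σ hσ =>
      (rightCosetSetoid_mk_mul_eq_iff H π σ).2 (hC _ fun c hc => ?_)⟩
    rw [Subgroup.coe_mul, Subgroup.coe_mul, Subgroup.coe_inv,
      Equiv.Perm.mul_mul_inv_apply_eq_self_iff]
    exact hσ _ (Finset.mem_image_of_mem _ hc)
end

section
/- Let (D, G) be a data symmetry. The following conditions are equivalent: (1) for every finite E ⊆ D and all c, d ∈ D \ E with c ≠ d, the orbit of c under the subgroup G_E is contained in the orbit of c under the subgroup of G generated by G_{E∪{c}} ∪ G_{E∪{d}}; (2) for every subgroup H ≤ G and all finite C, C' ⊆ D, if G_C ≤ H and G_{C'} ≤ H then G_{C∩C'} ≤ H (i.e., the symmetry admits least supports). -/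
/-- The pointwise stabilizer `G_C = {π ∈ G : π(c) = c for all c ∈ C}`, as a subgroup
of `G ≤ Sym(D)`. -/
def ptStab {D : Type*} (G : Subgroup (Equiv.Perm D)) (C : Set D) : Subgroup ↥G where
  carrier := {π : ↥G | ∀ c ∈ C, (π : Equiv.Perm D) c = c}
  one_mem' := by intro c _; simp
  mul_mem' := by
    intro a b ha hb c hc
    show ((a * b : ↥G) : Equiv.Perm D) c = c
    have h : ((a * b : ↥G) : Equiv.Perm D) c
        = ((a : ↥G) : Equiv.Perm D) (((b : ↥G) : Equiv.Perm D) c) := rfl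
    rw [h, hb c hc, ha c hc]
  inv_mem' := by
    intro a ha c hc
    show ((a⁻¹ : ↥G) : Equiv.Perm D) c = c
    have h : ((a⁻¹ : ↥G) : Equiv.Perm D) = ((a : ↥G) : Equiv.Perm D)⁻¹ := rfl
    rw [h]
    exact Equiv.Perm.inv_eq_iff_eq.mpr (ha c hc).symm

/-
If a finite set `C` supports `H` (i.e. `G_C ≤ H`), condition (1) says exactly that
`G_E = G_{E∪{c}} ⊔ G_{E∪{d}}` for distinct `c, d ∉ E`: given `π ∈ G_E`, a `σ` in the join with
`σ c = π c` leaves `σ⁻¹ π ∈ G_{E∪{c}}`. So the supports of `H`, an upward closed family, are closed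
under intersecting `E ∪ {c}` with `E ∪ {d}`. Peeling off the points of `C \ C'` and `C' \ C` one at a
time then gives `C ∩ C'` from `C` and `C'`; conversely, (2) applied to `E ∪ {c}`, `E ∪ {d}` and
the join gives (1).
-/

namespace Monotone

variable {α : Type*} [DecidableEq α] {P : Finset α → Prop}

theorem of_insert_of_union (hmono : Monotone P)
    (hP : ∀ E c d, c ≠ d → P (insert c E) → P (insert d E) → P E)
    {E B : Finset α} {c : α} (hc : P (insert c E)) (hcB : c ∉ B) (hEB : P (E ∪ B)) : P E := by
  induction B using Finset.induction_on with
  | empty => simpa using hEB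
  | insert b B _ ih =>
    rw [Finset.mem_insert, not_or] at hcB
    refine ih hcB.2 (hP (E ∪ B) c b hcB.1 ?_ ?_)
    · exact hmono (Finset.insert_subset_insert c Finset.subset_union_left) hc
    · rwa [← Finset.union_insert]

theorem of_union_of_union (hmono : Monotone P)
    (hP : ∀ E c d, c ≠ d → P (insert c E) → P (insert d E) → P E)
    {E A B : Finset α} (hAB : Disjoint A B) (hA : P (E ∪ A)) (hB : P (E ∪ B)) : P E := by
  induction A using Finset.induction_on with
  | empty => simpa using hA
  | insert a A _ ih =>
    rw [Finset.disjoint_insert_left] at hAB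
    refine ih hAB.2 (hmono.of_insert_of_union hP (B := B) ?_ hAB.1 ?_)
    · rwa [← Finset.union_insert]
    · exact hmono (Finset.union_subset_union_left Finset.subset_union_left) hB

theorem inter_of_insert_insert (hmono : Monotone P)
    (hP : ∀ E c d, c ≠ d → P (insert c E) → P (insert d E) → P E)
    {C C' : Finset α} (hC : P C) (hC' : P C') : P (C ∩ C') := by
  refine hmono.of_union_of_union hP (A := C \ C') (B := C' \ C) disjoint_sdiff_sdiff ?_ ?_
  · rwa [Finset.union_comm, Finset.sdiff_union_inter]
  · rwa [Finset.union_comm, Finset.inter_comm, Finset.sdiff_union_inter]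

end Monotone

section ptStab

variable {D : Type*} {G : Subgroup (Equiv.Perm D)}

theorem ptStab_anti {S T : Set D} (h : S ⊆ T) : ptStab G T ≤ ptStab G S :=
  fun _ hπ c hc => hπ c (h hc)

theorem ptStab_le_iff_orbit_subset {E : Set D} {c : D} {K : Subgroup G}
    (hKE : K ≤ ptStab G E) (hcK : ptStab G (insert c E) ≤ K) :
    ptStab G E ≤ K ↔
      ∀ e : D, (∃ π ∈ ptStab G E, (π : Equiv.Perm D) c = e) →
        ∃ σ ∈ K, (σ : Equiv.Perm D) c = e := by
  refine ⟨fun hEK e ⟨π, hπ, hπc⟩ => ⟨π, hEK hπ, hπc⟩, fun horbit π hπ => ?_⟩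
  obtain ⟨σ, hσ, hσc⟩ := horbit _ ⟨π, hπ, rfl⟩
  have hσπ : σ⁻¹ * π ∈ ptStab G (insert c E) := by
    rintro x (rfl | hx)
    · exact (Equiv.Perm.inv_eq_iff_eq).2 hσc.symm
    · exact (Equiv.Perm.inv_eq_iff_eq).2 ((hπ x hx).trans (hKE hσ x hx).symm)
  simpa using mul_mem hσ (hcK hσπ)

theorem ptStab_le_closure_iff_orbit_subset (E : Set D) (c d : D) :
    ptStab G E ≤ Subgroup.closure ((ptStab G (insert c E) : Set G) ∪ ptStab G (insert d E)) ↔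
      ∀ e : D, (∃ π ∈ ptStab G E, (π : Equiv.Perm D) c = e) →
        ∃ σ ∈ Subgroup.closure ((ptStab G (insert c E) : Set G) ∪ ptStab G (insert d E)),
          (σ : Equiv.Perm D) c = e :=
  ptStab_le_iff_orbit_subset
    ((Subgroup.closure_le _).2 <|
      Set.union_subset (ptStab_anti (Set.subset_insert c E)) (ptStab_anti (Set.subset_insert d E)))
    (fun _ hπ => Subgroup.subset_closure (Or.inl hπ))

end ptStab

/-- A data symmetry (D, G) admits least supports iff for every finite
E ⊆ D and distinct c, d ∉ E, the orbit of c under G_E is contained in its orbit under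
the subgroup generated by G_{E∪{c}} ∪ G_{E∪{d}}. -/
theorem least_supports_characterization {D : Type*} (G : Subgroup (Equiv.Perm D)) :
    -- (1)
    (∀ (E : Finset D) (c d : D), c ∉ E → d ∉ E → c ≠ d →
      ∀ e : D,
        (∃ π ∈ ptStab G (↑E : Set D), (π : Equiv.Perm D) c = e) →
        ∃ π ∈ Subgroup.closure
            ((ptStab G (insert c (↑E : Set D)) : Set ↥G) ∪
             (ptStab G (insert d (↑E : Set D)) : Set ↥G)),
          (π : Equiv.Perm D) c = e)
    ↔
    -- (2) the symmetry admits least supports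
    (∀ (H : Subgroup ↥G) (C C' : Finset D),
      ptStab G (↑C : Set D) ≤ H → ptStab G (↑C' : Set D) ≤ H →
      ptStab G ((↑C : Set D) ∩ (↑C' : Set D)) ≤ H) := by
  classical
  constructor
  · intro horbit H C C' hC hC'
    have hmono : Monotone fun C : Finset D => ptStab G (↑C : Set D) ≤ H :=
      fun C C' h hC => (ptStab_anti (Finset.coe_subset.2 h)).trans hC
    rw [← Finset.coe_inter]
    refine hmono.inter_of_insert_insert (fun E c d hcd hc hd => ?_) hC hC'
    by_cases hcE : c ∈ E
    · rwa [Finset.insert_eq_of_mem hcE] at hc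
    by_cases hdE : d ∈ E
    · rwa [Finset.insert_eq_of_mem hdE] at hd
    rw [Finset.coe_insert] at hc hd
    refine ((ptStab_le_closure_iff_orbit_subset _ c d).2 (horbit E c d hcE hdE hcd)).trans ?_
    exact (Subgroup.closure_le H).2 (Set.union_subset hc hd)
  · intro hsupp E c d _ _ hcd
    refine (ptStab_le_closure_iff_orbit_subset _ c d).1 ?_
    refine (ptStab_anti ?_).trans (hsupp _ (insert c E) (insert d E) ?_ ?_)
    · rintro x ⟨hxc, hxd⟩
      rw [Finset.coe_insert] at hxc hxd
      rcases hxc with rfl | hx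
      exacts [hxd.resolve_left hcd, hx]
    · rw [Finset.coe_insert]
      exact fun _ hπ => Subgroup.subset_closure (Or.inl hπ)
    · rw [Finset.coe_insert]
      exact fun _ hπ => Subgroup.subset_closure (Or.inr hπ)
end

section
/- (The equality symmetry admits least supports, Gabbay–Pitts.) Let D be a countably infinite set and G = Sym(D). For every G-set X, every x ∈ X, and all finite sets C, C' ⊆ D: if C supports x and C' supports x, then C ∩ C' supports x. Consequently, every element of every nominal G-set has a least finite support. -/
/-- One-step Gabbay–Pitts lemma: if `C` and `C'` both support `x` and `b ∉ C`,
then `C'.erase b` supports `x`. -/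
private lemma gp_step {D X : Type*} [Infinite D] [DecidableEq D]
    (act : X → Equiv.Perm D → X)
    (act_mul : ∀ (x : X) (π σ : Equiv.Perm D), act x (π * σ) = act (act x π) σ)
    (x : X) (C C' : Finset D)
    (hC : ∀ π : Equiv.Perm D, (∀ c ∈ C, π c = c) → act x π = x)
    (hC' : ∀ π : Equiv.Perm D, (∀ c ∈ C', π c = c) → act x π = x)
    (b : D) (hbC : b ∉ C) :
    ∀ π : Equiv.Perm D, (∀ c ∈ C'.erase b, π c = c) → act x π = x := by
  classical
  intro π hπ
  obtain ⟨f, hf⟩ := Infinite.exists_notMem_finset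
      (insert b (C ∪ C' ∪ (C ∪ C').image π))
  have hfb : f ≠ b := by intro h; exact hf (by simp [h])
  have hfC : f ∉ C := fun h => hf (by simp [h])
  have hfC' : f ∉ C' := fun h => hf (by simp [h])
  have hπf : ∀ c, c ∈ C ∪ C' → π.symm f ≠ c := by
    intro c hc h
    apply hf
    have : π c = f := by rw [← h]; exact π.apply_symm_apply f
    simp only [Finset.mem_insert, Finset.mem_union, Finset.mem_image]
    right; right
    exact ⟨c, Finset.mem_union.mp hc, this⟩
  have hπfC : π.symm f ∉ C := fun h => hπf _ (by simp [h]) rfl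
  have hπfC' : π.symm f ∉ C' := fun h => hπf _ (by simp [h]) rfl
  set σ : Equiv.Perm D := Equiv.swap b f with hσdef
  set ν : Equiv.Perm D := Equiv.swap f (π.symm f) with hνdef
  -- σ fixes C pointwise
  have hσC : ∀ c ∈ C, σ c = c := by
    intro c hc
    exact Equiv.swap_apply_of_ne_of_ne (by rintro rfl; exact hbC hc)
      (by rintro rfl; exact hfC hc)
  -- ν fixes C pointwise
  have hνC : ∀ c ∈ C, ν c = c := by
    intro c hc
    exact Equiv.swap_apply_of_ne_of_ne (by rintro rfl; exact hfC hc)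
      (by rintro rfl; exact hπfC hc)
  set ρ : Equiv.Perm D := σ * (π * ν) * σ with hρdef
  -- ρ fixes C' pointwise
  have hρC' : ∀ c ∈ C', ρ c = c := by
    intro c hc
    by_cases hcb : c = b
    · subst hcb
      have h1 : σ c = f := Equiv.swap_apply_left _ _
      have h2 : ν f = π.symm f := Equiv.swap_apply_left _ _
      have h3 : π (π.symm f) = f := π.apply_symm_apply f
      have h4 : σ f = c := Equiv.swap_apply_right _ _
      simp only [hρdef, Equiv.Perm.mul_apply]
      rw [h1, h2, h3, h4]
    · have hcf : c ≠ f := by rintro rfl; exact hfC' hc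
      have h1 : σ c = c := Equiv.swap_apply_of_ne_of_ne hcb hcf
      have h2 : ν c = c := Equiv.swap_apply_of_ne_of_ne hcf
        (by rintro rfl; exact hπfC' hc)
      have h3 : π c = c := hπ c (Finset.mem_erase.mpr ⟨hcb, hc⟩)
      simp only [hρdef, Equiv.Perm.mul_apply]
      rw [h1, h2, h3, h1]
  have hxσ : act x σ = x := hC σ hσC
  have hxν : act x ν = x := hC ν hνC
  have hxρ : act x ρ = x := hC' ρ hρC'
  -- π * ν = σ * ρ * σ
  have hσσ : σ * σ = 1 := Equiv.swap_mul_self _ _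
  have hkey : π * ν = σ * ρ * σ := by
    rw [hρdef]
    simp only [← mul_assoc]
    rw [hσσ, one_mul, mul_assoc (π * ν), hσσ, mul_one]
  have hxπν : act x (π * ν) = x := by
    rw [hkey, act_mul, act_mul, hxσ, hxρ, hxσ]
  have hνinv : ν⁻¹ = ν := Equiv.swap_inv _ _
  calc act x π = act x ((π * ν) * ν⁻¹) := by rw [mul_inv_cancel_right]
    _ = act (act x (π * ν)) ν⁻¹ := act_mul _ _ _
    _ = act x ν := by rw [hxπν, hνinv]
    _ = x := hxν

/-- Gabbay–Pitts: the equality symmetry admits least supports.  For a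
countably infinite D and G = Sym(D): in any G-set, the intersection of two finite
supports of an element is again a support; consequently, in any nominal G-set every
element has a least finite support. -/
theorem equality_symmetry_least_supports {D X : Type*} [Countable D] [Infinite D]
    (act : X → Equiv.Perm D → X)
    (act_one : ∀ x : X, act x 1 = x)
    (act_mul : ∀ (x : X) (π σ : Equiv.Perm D), act x (π * σ) = act (act x π) σ) :
    -- finite supports are closed under intersection
    (∀ (x : X) (C C' : Finset D),
      (∀ π : Equiv.Perm D, (∀ c ∈ C, π c = c) → act x π = x) →
      (∀ π : Equiv.Perm D, (∀ c ∈ C', π c = c) → act x π = x) →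
      ∀ π : Equiv.Perm D, (∀ c ∈ C, c ∈ C' → π c = c) → act x π = x) ∧
    -- consequently: if X is nominal then every element has a least finite support
    ((∀ x : X, ∃ C : Finset D, ∀ π : Equiv.Perm D, (∀ c ∈ C, π c = c) → act x π = x) →
      ∀ x : X, ∃ C : Finset D,
        (∀ π : Equiv.Perm D, (∀ c ∈ C, π c = c) → act x π = x) ∧
        ∀ C' : Finset D,
          (∀ π : Equiv.Perm D, (∀ c ∈ C', π c = c) → act x π = x) → C ⊆ C') := by
  classical
  have inter : ∀ (x : X) (C C' : Finset D),
      (∀ π : Equiv.Perm D, (∀ c ∈ C, π c = c) → act x π = x) →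
      (∀ π : Equiv.Perm D, (∀ c ∈ C', π c = c) → act x π = x) →
      ∀ π : Equiv.Perm D, (∀ c ∈ C, c ∈ C' → π c = c) → act x π = x := by
    intro x C C'
    -- induction on the cardinality of C' \ C
    have main : ∀ (n : ℕ) (C' : Finset D), (C' \ C).card = n →
        (∀ π : Equiv.Perm D, (∀ c ∈ C, π c = c) → act x π = x) →
        (∀ π : Equiv.Perm D, (∀ c ∈ C', π c = c) → act x π = x) →
        ∀ π : Equiv.Perm D, (∀ c ∈ C, c ∈ C' → π c = c) → act x π = x := by
      intro n
      induction n with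
      | zero =>
        intro C' hcard hC hC' π hπ
        have hsub : C' ⊆ C := by
          intro c hc
          by_contra hcC
          have : c ∈ C' \ C := Finset.mem_sdiff.mpr ⟨hc, hcC⟩
          rw [Finset.card_eq_zero.mp hcard] at this
          exact absurd this (Finset.notMem_empty c)
        exact hC' π (fun c hc => hπ c (hsub hc) hc)
      | succ n ih =>
        intro C' hcard hC hC' π hπ
        have hne : (C' \ C).Nonempty := by
          rw [← Finset.card_pos, hcard]; omega
        obtain ⟨b, hb⟩ := hne
        obtain ⟨hbC', hbC⟩ := Finset.mem_sdiff.mp hb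
        have hstep := gp_step act act_mul x C C' hC hC' b hbC
        have hcard' : ((C'.erase b) \ C).card = n := by
          rw [Finset.erase_sdiff_comm]
          rw [Finset.card_erase_of_mem hb, hcard]
          omega
        exact ih (C'.erase b) hcard' hC hstep π
          (fun c hc hc' => hπ c hc (Finset.mem_of_mem_erase hc'))
    intro hC hC' π hπ
    exact main (C' \ C).card C' rfl hC hC' π hπ
  refine ⟨inter, ?_⟩
  intro hnom x
  obtain ⟨C₀, hC₀⟩ := hnom x
  have hP : ∃ n : ℕ, ∃ C : Finset D, C.card = n ∧
      ∀ π : Equiv.Perm D, (∀ c ∈ C, π c = c) → act x π = x :=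
    ⟨C₀.card, C₀, rfl, hC₀⟩
  obtain ⟨C, hCcard, hCsupp⟩ := Nat.find_spec hP
  refine ⟨C, hCsupp, ?_⟩
  intro C' hC'supp
  -- C ∩ C' supports x
  have hinter : ∀ π : Equiv.Perm D, (∀ c ∈ C ∩ C', π c = c) → act x π = x := by
    intro π hπ
    exact inter x C C' hCsupp hC'supp π
      (fun c hc hc' => hπ c (Finset.mem_inter.mpr ⟨hc, hc'⟩))
  have hle : Nat.find hP ≤ (C ∩ C').card :=
    Nat.find_min' hP ⟨C ∩ C', rfl, hinter⟩
  have hsub : C ∩ C' ⊆ C := Finset.inter_subset_left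
  have heq : C ∩ C' = C :=
    Finset.eq_of_subset_of_card_le hsub (by omega)
  exact Finset.inter_eq_left.mp heq
end

section
/- (The total order symmetry admits least supports.) Let D = ℚ and let G ≤ Sym(ℚ) be the group of all monotone (order-preserving) bijections of the rational numbers. For every G-set X, every x ∈ X, and all finite sets C, C' ⊆ ℚ: if C supports x and C' supports x, then C ∩ C' supports x. Consequently, every element of every nominal G-set has a least finite support. -/
/-- The group of all monotone (order-preserving) bijections of ℚ, as a subgroup of
Sym(ℚ). -/
def monoPerm : Subgroup (Equiv.Perm ℚ) where
  carrier := {π : Equiv.Perm ℚ | Monotone ⇑π}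
  one_mem' := fun _ _ h => h
  mul_mem' := by
    intro a b ha hb x y h
    exact ha (hb h)
  inv_mem' := by
    intro a ha x y hxy
    by_contra hcon
    push_neg at hcon
    have h1 : a (a⁻¹ y) ≤ a (a⁻¹ x) := ha hcon.le
    rw [Equiv.Perm.inv_def, Equiv.apply_symm_apply, Equiv.apply_symm_apply] at h1
    have hxy' : x = y := le_antisymm hxy h1
    subst hxy'
    exact lt_irrefl _ hcon

/-!
Write `G[C]` for the pointwise stabiliser of a finite `C ⊆ ℚ` in the group of monotone bijections.
The key fact is `G[C ∩ C'] ≤ G[C] ⊔ G[C']`: as the elements fixing `x` form a subgroup, supports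
are closed under intersection, and a `⊆`-minimal support is then the least one.

The points of `C' \ C` are removed one at a time. Let `d ∉ C` and let `π` fix `E`, with `d < π d`
(otherwise pass to `π⁻¹`). Some `β` fixing `E ∪ {d}` pushes `C` off `[d, π d]`; then some `τ`
fixing `β C ∪ E` sends `d` to `π d`, so `τ ∈ β G[C] β⁻¹ ≤ G[C] ⊔ G[E ∪ {d}]` and
`τ⁻¹ π ∈ G[E ∪ {d}]`. All these maps are piecewise-linear bumps.
-/

section Median

variable {α : Type*} [LinearOrder α]

def median3 (a b c : α) : α := max (min a b) (min (max a b) c)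

lemma median3_le_iff {a b c y : α} :
    median3 a b c ≤ y ↔ a ≤ y ∧ b ≤ y ∨ a ≤ y ∧ c ≤ y ∨ b ≤ y ∧ c ≤ y := by
  simp only [median3, max_le_iff, min_le_iff]
  tauto

lemma le_median3_iff {a b c y : α} :
    y ≤ median3 a b c ↔ y ≤ a ∧ y ≤ b ∨ y ≤ a ∧ y ≤ c ∨ y ≤ b ∧ y ≤ c := by
  simp only [median3, le_max_iff, le_min_iff]
  tauto

lemma median3_eq_left {a b c : α} (h : b ≤ a ∧ a ≤ c ∨ c ≤ a ∧ a ≤ b) : median3 a b c = a := by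
  have := le_refl a
  exact le_antisymm (median3_le_iff.2 (by tauto)) (le_median3_iff.2 (by tauto))

@[simp] lemma median3_self_right (a b : α) : median3 a b b = b := by
  simp [median3]

lemma StrictMono.median3 {β : Type*} [Preorder β] {f g h : β → α} (hf : StrictMono f)
    (hg : StrictMono g) (hh : StrictMono h) : StrictMono fun x => median3 (f x) (g x) (h x) :=
  fun _ _ hxy => max_lt_max (min_lt_min (hf hxy) (hg hxy))
    (min_lt_min (max_lt_max (hf hxy) (hg hxy)) (hh hxy))

lemma median3_apply_median3_symm (e₁ e₂ e₃ : α ≃o α) (y : α) :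
    let m := median3 (e₁.symm y) (e₂.symm y) (e₃.symm y)
    median3 (e₁ m) (e₂ m) (e₃ m) = y := by
  intro m
  apply le_antisymm
  · simp only [median3_le_iff, ← OrderIso.le_symm_apply]
    exact le_median3_iff.1 le_rfl
  · simp only [le_median3_iff, ← OrderIso.symm_apply_le]
    exact median3_le_iff.1 le_rfl

def OrderIso.median3 (e₁ e₂ e₃ : α ≃o α) : α ≃o α :=
  (e₁.strictMono.median3 e₂.strictMono e₃.strictMono).orderIsoOfRightInverse _ _
    (median3_apply_median3_symm e₁ e₂ e₃)

@[simp] lemma OrderIso.median3_apply (e₁ e₂ e₃ : α ≃o α) (x : α) :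
    OrderIso.median3 e₁ e₂ e₃ x = _root_.median3 (e₁ x) (e₂ x) (e₃ x) := rfl

end Median

section Bump

variable {K : Type*} [Field K] [LinearOrder K] [IsStrictOrderedRing K]

def OrderIso.homothety (c : K) {k : K} (hk : 0 < k) : K ≃o K :=
  (OrderIso.addRight (-c)).trans ((OrderIso.mulLeft₀ k hk).trans (OrderIso.addRight c))

@[simp] lemma OrderIso.homothety_apply (c : K) {k : K} (hk : 0 < k) (x : K) :
    OrderIso.homothety c hk x = c + k * (x - c) := by
  simp only [OrderIso.homothety, OrderIso.trans_apply, OrderIso.addRight_apply,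
    OrderIso.mulLeft₀_apply]
  ring

variable {u t t' v : K}

/-- The piecewise-linear map through `(u, u)`, `(t, t')`, `(v, v)` that fixes everything outside
`(u, v)`, written as the median of the identity and the homotheties centred at `u` and `v` sending
`t` to `t'`. -/
def OrderIso.bump (hut : u < t) (htv : t < v) (hut' : u < t') (ht'v : t' < v) : K ≃o K :=
  OrderIso.median3 (OrderIso.refl K)
    (OrderIso.homothety u (div_pos (sub_pos.2 hut') (sub_pos.2 hut)))
    (OrderIso.homothety v (div_pos (sub_pos.2 ht'v) (sub_pos.2 htv)))

lemma OrderIso.bump_apply_self (hut : u < t) (htv : t < v) (hut' : u < t') (ht'v : t' < v) :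
    OrderIso.bump hut htv hut' ht'v t = t' := by
  have h₁ : u + (t' - u) / (t - u) * (t - u) = t' := by
    rw [div_mul_cancel₀ _ (sub_pos.2 hut).ne']; ring
  have h₂ : v + (v - t') / (v - t) * (t - v) = t' := by
    rw [← neg_sub v t, mul_neg, div_mul_cancel₀ _ (sub_pos.2 htv).ne']; ring
  simp [OrderIso.bump, h₁, h₂]

lemma OrderIso.bump_apply_of_notMem_Ioo (hut : u < t) (htv : t < v) (hut' : u < t') (ht'v : t' < v)
    {x : K} (hx : x ∉ Set.Ioo u v) : bump hut htv hut' ht'v x = x := by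
  set L := u + (t' - u) / (t - u) * (x - u)
  set R := v + (v - t') / (v - t) * (x - v)
  have hLR : (L - x) * (R - x) = -((t' - t) ^ 2 / ((t - u) * (v - t))) * ((x - u) * (x - v)) := by
    have := (sub_pos.2 hut).ne'
    have := (sub_pos.2 htv).ne'
    simp only [L, R]
    field_simp
    ring
  have hx' : 0 ≤ (x - u) * (x - v) := by
    rw [Set.mem_Ioo, not_and_or, not_lt, not_lt] at hx
    rcases hx with hx | hx
    · exact mul_nonneg_of_nonpos_of_nonpos (by linarith) (by linarith [hut.trans htv])
    · exact mul_nonneg (by linarith [hut.trans htv]) (by linarith)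
  have hcoef : 0 ≤ (t' - t) ^ 2 / ((t - u) * (v - t)) :=
    div_nonneg (sq_nonneg _) (mul_pos (sub_pos.2 hut) (sub_pos.2 htv)).le
  have hsign : (L - x) * (R - x) ≤ 0 := by
    rw [hLR]; exact mul_nonpos_of_nonpos_of_nonneg (neg_nonpos.2 hcoef) hx'
  simp only [OrderIso.bump, OrderIso.median3_apply, OrderIso.refl_apply, OrderIso.homothety_apply]
  apply median3_eq_left
  rcases mul_nonpos_iff.1 hsign with ⟨h₁, h₂⟩ | ⟨h₁, h₂⟩
  · exact Or.inr ⟨sub_nonpos.1 h₂, sub_nonneg.1 h₁⟩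
  · exact Or.inl ⟨sub_nonpos.1 h₁, sub_nonneg.1 h₂⟩

end Bump

lemma Subgroup.mem_sup_of_inv_mul_mul_mem {G : Type*} [Group G] {H K : Subgroup G} {β τ : G}
    (hβ : β ∈ K) (hτ : β⁻¹ * τ * β ∈ H) : τ ∈ H ⊔ K := by
  have hβ' : β ∈ H ⊔ K := Subgroup.mem_sup_right hβ
  have := mul_mem (mul_mem hβ' (Subgroup.mem_sup_left hτ)) (inv_mem hβ')
  rwa [mul_assoc, mul_assoc, mul_inv_cancel, mul_one, mul_inv_cancel_left] at this

namespace monoPerm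

local notation "G[" C "]" => fixingSubgroup monoPerm ((C : Finset ℚ) : Set ℚ)

def ofOrderIso (e : ℚ ≃o ℚ) : monoPerm := ⟨e.toEquiv, e.monotone⟩

lemma strictMono_smul (π : monoPerm) : StrictMono (π • · : ℚ → ℚ) :=
  π.2.strictMono_of_injective (Equiv.injective _)

lemma exists_mem_fixingSubgroup_smul_eq {S : Finset ℚ} {a b : ℚ} (hab : a ≤ b)
    (hS : ∀ s ∈ S, s ∉ Set.Icc a b) :
    ∃ τ ∈ G[S], τ • a = b := by
  obtain ⟨u, hSu, hu⟩ := Order.exists_between_finsets (S.filter (· < a)) {a} (by simp)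
  obtain ⟨v, hv, hSv⟩ := Order.exists_between_finsets {b} (S.filter (b < ·)) (by simp)
  simp only [Finset.mem_filter, Finset.mem_singleton, forall_eq, and_imp] at hSu hu hv hSv
  have hub : u < b := hu.trans_le hab
  have hav : a < v := hab.trans_lt hv
  refine ⟨ofOrderIso (OrderIso.bump hu hav hub hv), ?_, OrderIso.bump_apply_self hu hav hub hv⟩
  refine (mem_fixingSubgroup_iff monoPerm).2 fun s hs =>
    OrderIso.bump_apply_of_notMem_Ioo hu hav hub hv ?_
  rintro ⟨hus, hsv⟩
  have hs' := hS s hs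
  rw [Set.mem_Icc, not_and_or, not_le, not_le] at hs'
  rcases hs' with h | h
  · exact (hSu s hs h).not_gt hus
  · exact (hSv s hs h).not_gt hsv

lemma exists_mem_fixingSubgroup_forall_smul_notMem_Icc {C E : Finset ℚ} {d d₁ : ℚ}
    (hdC : d ∉ C) (hdd₁ : d < d₁) (hE : ∀ e ∈ E, e ∉ Set.Ioc d d₁) :
    ∃ β ∈ G[insert d E], ∀ c ∈ C, β • c ∉ Set.Icc d d₁ := by
  obtain ⟨t', ht', hEt'⟩ := Order.exists_between_finsets {d₁} (E.filter (d₁ < ·)) (by simp)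
  simp only [Finset.mem_singleton, forall_eq, Finset.mem_filter, and_imp] at ht' hEt'
  obtain ⟨t, ht, hCt⟩ := Order.exists_between_finsets {d} (insert t' (C.filter (d < ·)))
    (by simpa using hdd₁.trans ht')
  simp only [Finset.mem_singleton, forall_eq, Finset.mem_insert, Finset.mem_filter,
    forall_eq_or_imp, and_imp] at ht hCt
  obtain ⟨β, hβ, hβt⟩ := exists_mem_fixingSubgroup_smul_eq (S := insert d E) hCt.1.le (by
    rintro s hs ⟨hts, hst'⟩
    rw [Finset.mem_insert] at hs
    rcases hs with rfl | hs
    · exact hts.not_gt ht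
    · have hds : d₁ < s := by
        by_contra h
        exact hE s hs ⟨ht.trans_le hts, not_lt.1 h⟩
      exact (hEt' s hs hds).not_ge hst')
  refine ⟨β, hβ, fun c hc ⟨hdc, hcd₁⟩ => ?_⟩
  have hβd : β • d = d := (mem_fixingSubgroup_iff monoPerm).1 hβ d (Finset.mem_insert_self d E)
  rcases lt_trichotomy c d with h | rfl | h
  · rw [← hβd, (strictMono_smul β).le_iff_le] at hdc
    exact hdc.not_gt h
  · exact hdC hc
  · have : β • t < β • c := strictMono_smul β (hCt.2 c hc h)
    rw [hβt] at this
    linarith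

lemma fixingSubgroup_le_sup_insert {C E : Finset ℚ} {d : ℚ} (hdC : d ∉ C) :
    G[E] ≤ G[C] ⊔ G[insert d E] := by
  intro π hπ
  rw [mem_fixingSubgroup_iff] at hπ
  wlog hdd₁ : d < π • d generalizing π
  · rcases (not_lt.1 hdd₁).eq_or_lt with hfix | hlt
    · refine Subgroup.mem_sup_right ((mem_fixingSubgroup_iff monoPerm).2 ?_)
      simpa [hfix] using hπ
    · refine (Subgroup.inv_mem_iff _).1 (this (π := π⁻¹) (fun e he => ?_) ?_)
      · rw [inv_smul_eq_iff, hπ e he]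
      · rwa [← (strictMono_smul π).lt_iff_lt, smul_inv_smul]
  set d₁ := π • d
  have hE : ∀ e ∈ E, e ∉ Set.Ioc d d₁ := fun e he ⟨hde, hed₁⟩ => by
    have hd₁e : π • d < π • e := strictMono_smul π hde
    rw [hπ e he] at hd₁e
    exact hd₁e.not_ge hed₁
  obtain ⟨β, hβ, hβC⟩ := exists_mem_fixingSubgroup_forall_smul_notMem_Icc hdC hdd₁ hE
  obtain ⟨τ, hτ, hτd⟩ :=
    exists_mem_fixingSubgroup_smul_eq (S := C.image (β • ·) ∪ E) hdd₁.le (by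
      intro s hs ⟨hds, hsd₁⟩
      rcases Finset.mem_union.1 hs with hs | hs
      · obtain ⟨c, hc, rfl⟩ := Finset.mem_image.1 hs
        exact hβC c hc ⟨hds, hsd₁⟩
      · rcases hds.eq_or_lt with rfl | hlt
        · exact hdd₁.ne (hπ d hs).symm
        · exact hE s hs ⟨hlt, hsd₁⟩)
  rw [mem_fixingSubgroup_iff] at hβ hτ
  have hconj : β⁻¹ * τ * β ∈ G[C] :=
    (mem_fixingSubgroup_iff monoPerm).2 fun c hc => by
      rw [mul_smul, mul_smul, hτ (β • c) (Finset.mem_union_left _ (Finset.mem_image_of_mem _ hc)),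
        inv_smul_smul]
  have hτ_mem : τ ∈ G[C] ⊔ G[insert d E] :=
    Subgroup.mem_sup_of_inv_mul_mul_mem ((mem_fixingSubgroup_iff monoPerm).2 hβ) hconj
  have hrest : τ⁻¹ * π ∈ G[insert d E] :=
    (mem_fixingSubgroup_iff monoPerm).2 fun e he => by
      rw [mul_smul, inv_smul_eq_iff]
      rcases Finset.mem_insert.1 he with rfl | he
      · exact hτd.symm
      · rw [hπ e he, hτ e (Finset.mem_union_right _ he)]
  simpa using mul_mem hτ_mem (Subgroup.mem_sup_right hrest)

lemma fixingSubgroup_le_sup_union {C D E : Finset ℚ} (hD : Disjoint D C) :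
    G[E] ≤ G[C] ⊔ G[D ∪ E] := by
  induction D using Finset.induction_on with
  | empty => simp
  | insert d D _ ih =>
    rw [Finset.disjoint_insert_left] at hD
    rw [Finset.insert_union]
    exact (ih hD.2).trans (sup_le le_sup_left (fixingSubgroup_le_sup_insert hD.1))

lemma fixingSubgroup_inter_le_sup (C C' : Finset ℚ) :
    G[C ∩ C'] ≤ G[C] ⊔ G[C'] := by
  have := fixingSubgroup_le_sup_union (C := C) (D := C' \ C) (E := C' ∩ C) Finset.sdiff_disjoint
  rwa [Finset.sdiff_union_inter, Finset.inter_comm] at this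

lemma infClosed_setOf_fixingSubgroup_le (H : Subgroup monoPerm) :
    InfClosed {C : Finset ℚ | G[C] ≤ H} :=
  fun C hC C' hC' => (fixingSubgroup_inter_le_sup C C').trans (sup_le hC hC')

end monoPerm

lemma InfClosed.exists_isLeast {α : Type*} [SemilatticeInf α] [WellFoundedLT α] {s : Set α}
    (hs : InfClosed s) (hne : s.Nonempty) : ∃ a, IsLeast s a := by
  obtain ⟨a, ha⟩ := WellFoundedLT.exists_minimal inferInstance s hne
  exact ⟨a, ha.1, fun b hb => (ha.2 (hs ha.1 hb) inf_le_left).trans inf_le_right⟩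

def rightStabilizer {G X : Type*} [Group G] (act : X → G → X) (act_one : ∀ x, act x 1 = x)
    (act_mul : ∀ x g h, act x (g * h) = act (act x g) h) (x : X) : Subgroup G where
  carrier := {g | act x g = x}
  one_mem' := act_one x
  mul_mem' {g h} hg hh := by
    simp only [Set.mem_ofPred_eq, act_mul] at hg hh ⊢
    rw [hg, hh]
  inv_mem' {g} hg := by
    simp only [Set.mem_ofPred_eq] at hg ⊢
    conv_lhs => rw [← hg]
    rw [← act_mul, mul_inv_cancel, act_one]

lemma supports_iff_fixingSubgroup_le {X : Type*} (act : X → monoPerm → X)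
    (act_one : ∀ x, act x 1 = x) (act_mul : ∀ x π σ, act x (π * σ) = act (act x π) σ)
    (x : X) (C : Finset ℚ) :
    (∀ π : monoPerm, (∀ c ∈ C, (π : Equiv.Perm ℚ) c = c) → act x π = x) ↔
      fixingSubgroup monoPerm (C : Set ℚ) ≤ rightStabilizer act act_one act_mul x := by
  simp [SetLike.le_def, mem_fixingSubgroup_iff, rightStabilizer, Subgroup.smul_def]

/-- the total order symmetry admits least supports.  For D = ℚ and G the
group of monotone bijections of ℚ: in any G-set, the intersection of two finite
supports of an element is again a support; consequently, in any nominal G-set every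
element has a least finite support. -/
theorem total_order_symmetry_least_supports {X : Type*}
    (act : X → ↥monoPerm → X)
    (act_one : ∀ x : X, act x 1 = x)
    (act_mul : ∀ (x : X) (π σ : ↥monoPerm), act x (π * σ) = act (act x π) σ) :
    -- finite supports are closed under intersection
    (∀ (x : X) (C C' : Finset ℚ),
      (∀ π : ↥monoPerm, (∀ c ∈ C, (π : Equiv.Perm ℚ) c = c) → act x π = x) →
      (∀ π : ↥monoPerm, (∀ c ∈ C', (π : Equiv.Perm ℚ) c = c) → act x π = x) →
      ∀ π : ↥monoPerm, (∀ c ∈ C ∩ C', (π : Equiv.Perm ℚ) c = c) → act x π = x) ∧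
    -- consequently: if X is nominal then every element has a least finite support
    ((∀ x : X, ∃ C : Finset ℚ,
        ∀ π : ↥monoPerm, (∀ c ∈ C, (π : Equiv.Perm ℚ) c = c) → act x π = x) →
      ∀ x : X, ∃ C : Finset ℚ,
        (∀ π : ↥monoPerm, (∀ c ∈ C, (π : Equiv.Perm ℚ) c = c) → act x π = x) ∧
        ∀ C' : Finset ℚ,
          (∀ π : ↥monoPerm, (∀ c ∈ C', (π : Equiv.Perm ℚ) c = c) → act x π = x) →
          C ⊆ C') := by
  have hsupp := supports_iff_fixingSubgroup_le act act_one act_mul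
  have hclosed x :=
    monoPerm.infClosed_setOf_fixingSubgroup_le (rightStabilizer act act_one act_mul x)
  refine ⟨fun x C C' hC hC' => ?_, fun hnom x => ?_⟩
  · rw [hsupp] at hC hC' ⊢
    exact hclosed x hC hC'
  · obtain ⟨C₀, hC₀⟩ := hnom x
    obtain ⟨C, hC, hleast⟩ := (hclosed x).exists_isLeast ⟨C₀, (hsupp x C₀).1 hC₀⟩
    exact ⟨C, (hsupp x C).2 hC, fun C' hC' => hleast ((hsupp x C').1 hC')⟩
end

section
/- Let (D, G) be a data symmetry that admits least supports, and let H ≤ G be an open subgroup. Let C ⊆ D be the least support of H, i.e., the least finite set (with respect to inclusion) such that G_C ≤ H. Then H = {π ∈ G : there exists σ ∈ H with σ(C) = C and σ(c) = π(c) for all c ∈ C}; in particular, every π ∈ H maps C onto C. -/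
/-- In a data symmetry (D, G) that admits least supports, if H ≤ G is an
open subgroup with least support C, then H consists exactly of those π ∈ G agreeing on
C with some σ ∈ H satisfying σ(C) = C; in particular every π ∈ H maps C onto C. -/
theorem open_subgroup_least_support_characterization {D : Type*}
    (G : Subgroup (Equiv.Perm D)) (H : Subgroup ↥G)
    -- (D, G) admits least supports
    (admits : ∀ (K : Subgroup ↥G) (C C' : Finset D),
      (∀ π : ↥G, (∀ c ∈ C, (π : Equiv.Perm D) c = c) → π ∈ K) →
      (∀ π : ↥G, (∀ c ∈ C', (π : Equiv.Perm D) c = c) → π ∈ K) →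
      ∀ π : ↥G, (∀ c ∈ C, c ∈ C' → (π : Equiv.Perm D) c = c) → π ∈ K)
    -- C is the least support of H (so H is open)
    (C : Finset D)
    (hC_supp : ∀ π : ↥G, (∀ c ∈ C, (π : Equiv.Perm D) c = c) → π ∈ H)
    (hC_least : ∀ C' : Finset D,
      (∀ π : ↥G, (∀ c ∈ C', (π : Equiv.Perm D) c = c) → π ∈ H) → C ⊆ C') :
    (∀ π : ↥G, π ∈ H ↔
      ∃ σ ∈ H, (⇑(σ : Equiv.Perm D)) '' (↑C : Set D) = (↑C : Set D) ∧
        ∀ c ∈ C, (σ : Equiv.Perm D) c = (π : Equiv.Perm D) c) ∧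
    (∀ π ∈ H, (⇑(π : Equiv.Perm D)) '' (↑C : Set D) = (↑C : Set D)) := by
  classical
  have key : ∀ π ∈ H, (⇑(π : Equiv.Perm D)) '' (↑C : Set D) = (↑C : Set D) := by
    intro π hπ
    have hsupp : ∀ τ : ↥G,
        (∀ c ∈ C.image (π : Equiv.Perm D), (τ : Equiv.Perm D) c = c) → τ ∈ H := by
      intro τ hτ
      have h1 : π⁻¹ * τ * π ∈ H := by
        apply hC_supp
        intro c hc
        have h2 := hτ ((π : Equiv.Perm D) c) (Finset.mem_image_of_mem _ hc)
        simp [Subgroup.coe_mul, Equiv.Perm.mul_apply, h2]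
      have h3 := H.mul_mem (H.mul_mem hπ h1) (H.inv_mem hπ)
      have h4 : π * (π⁻¹ * τ * π) * π⁻¹ = τ := by group
      rwa [h4] at h3
    have hsub := hC_least _ hsupp
    have hcard : (C.image (π : Equiv.Perm D)).card = C.card :=
      Finset.card_image_of_injective _ (Equiv.injective _)
    have heq : C.image (π : Equiv.Perm D) = C :=
      (Finset.eq_of_subset_of_card_le hsub (le_of_eq hcard)).symm
    rw [← Finset.coe_image, heq]
  refine ⟨?_, key⟩
  intro π
  constructor
  · intro hπ; exact ⟨π, hπ, key π hπ, fun c hc => rfl⟩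
  · rintro ⟨σ, hσ, -, hagree⟩
    have h1 : σ⁻¹ * π ∈ H := by
      apply hC_supp
      intro c hc
      have h2 : (π : Equiv.Perm D) c = (σ : Equiv.Perm D) c := (hagree c hc).symm
      simp [Subgroup.coe_mul, Equiv.Perm.mul_apply, h2]
    have h3 := H.mul_mem hσ h1
    rwa [mul_inv_cancel_left] at h3
end
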